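/- arXiv:1009.5562 — 2 statements merged into one kernel-verified Lean document; each statement's English description precedes it below -/
import Mathlib

section
/- Let F have unit-norm columns and F̃ satisfy F̃F̃* = (N/M)I with singular values relation as in the SVD argument: if λ_1,...,λ_M are the eigenvalues of FF*, then ‖F̃ − F‖_HS² ≥ ∑_{m=1}^M (√λ_m − √(N/M))². -/
noncomputable section

def hsq {M N : ℕ} (A : Matrix (Fin M) (Fin N) ℂ) : ℝ := ∑ i, ∑ j, ‖A i j‖ ^ 2

/-!
Rotate both frames by a unitary `U` with `U F Fᴴ Uᴴ = diag λ`; this does not change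
`‖F̃ - F‖_HS`. The rows of `U F` then have squared norms `λ_m`, and those of `U F̃` still have
squared norms `N / M` since `U F̃ (U F̃)ᴴ = U (N/M • 1) Uᴴ = N/M • 1`. Summing the reverse triangle
inequality `(‖a‖ - ‖b‖)² ≤ ‖a - b‖²` over the rows gives the bound.
-/

open Matrix

lemma sq_norm_sub_norm_le {E : Type*} [SeminormedAddCommGroup E] (a b : E) :
    (‖a‖ - ‖b‖) ^ 2 ≤ ‖a - b‖ ^ 2 :=
  sq_le_sq.mpr <| (abs_norm_sub_norm_le a b).trans (le_abs_self _)

section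
variable {M N : ℕ}

lemma hsq_sub_comm (A B : Matrix (Fin M) (Fin N) ℂ) : hsq (A - B) = hsq (B - A) := by
  simp only [hsq, Matrix.sub_apply, norm_sub_rev]

lemma hsq_eq_sum_norm_sq_row (A : Matrix (Fin M) (Fin N) ℂ) :
    hsq A = ∑ m, ‖WithLp.toLp 2 (A m)‖ ^ 2 := by
  simp only [hsq, EuclideanSpace.norm_sq_eq]

lemma re_mul_conjTranspose_apply_self (A : Matrix (Fin M) (Fin N) ℂ) (m : Fin M) :
    ((A * Aᴴ) m m).re = ‖WithLp.toLp 2 (A m)‖ ^ 2 := by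
  simp only [mul_apply, conjTranspose_apply, Complex.re_sum, Complex.star_def, Complex.mul_conj,
    Complex.normSq_eq_norm_sq, Complex.ofReal_re, EuclideanSpace.norm_sq_eq]

lemma hsq_eq_re_trace (A : Matrix (Fin M) (Fin N) ℂ) : hsq A = (A * Aᴴ).trace.re := by
  simp only [hsq_eq_sum_norm_sq_row, trace, Complex.re_sum, re_mul_conjTranspose_apply_self, diag]

lemma hsq_unitary_mul {U : Matrix (Fin M) (Fin M) ℂ} (hU : U ∈ unitaryGroup (Fin M) ℂ)
    (A : Matrix (Fin M) (Fin N) ℂ) : hsq (U * A) = hsq A := by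
  rw [hsq_eq_re_trace, hsq_eq_re_trace, conjTranspose_mul, ← Matrix.mul_assoc, trace_mul_cycle,
    ← star_eq_conjTranspose, ← Matrix.mul_assoc (star U), mem_unitaryGroup_iff'.mp hU,
    Matrix.one_mul]

lemma sum_sq_sqrt_sub_le_hsq (A B : Matrix (Fin M) (Fin N) ℂ) :
    ∑ m, (√((A * Aᴴ) m m).re - √((B * Bᴴ) m m).re) ^ 2 ≤ hsq (A - B) := by
  rw [hsq_eq_sum_norm_sq_row]
  refine Finset.sum_le_sum fun m _ => ?_
  simp only [re_mul_conjTranspose_apply_self, Real.sqrt_sq (norm_nonneg _)]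
  exact sq_norm_sub_norm_le _ _

end

theorem dist_to_tight_frame_eigenvalue_bound_general
    (M N : ℕ)
    (F Ft : Matrix (Fin M) (Fin N) ℂ)
    (htight : Ft * Ft.conjTranspose = ((N : ℂ) / M) • (1 : Matrix (Fin M) (Fin M) ℂ)) :
    ∑ m : Fin M,
        (Real.sqrt ((Matrix.isHermitian_mul_conjTranspose_self F).eigenvalues m)
          - Real.sqrt ((N : ℝ) / M)) ^ 2
      ≤ hsq (Ft - F) := by
  set hG := Matrix.isHermitian_mul_conjTranspose_self F
  set U : Matrix (Fin M) (Fin M) ℂ := star (hG.eigenvectorUnitary : Matrix (Fin M) (Fin M) ℂ)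
  have hU : U ∈ unitaryGroup (Fin M) ℂ := (star hG.eigenvectorUnitary).2
  have hconj (X : Matrix (Fin M) (Fin N) ℂ) : (U * X) * (U * X)ᴴ = U * (X * Xᴴ) * Uᴴ := by
    simp only [conjTranspose_mul, Matrix.mul_assoc]
  have hF : (U * F) * (U * F)ᴴ = diagonal (RCLike.ofReal ∘ hG.eigenvalues) := by
    rw [hconj, ← hG.conjStarAlgAut_star_eigenvectorUnitary, Unitary.conjStarAlgAut_apply]
    rfl
  have hFt : (U * Ft) * (U * Ft)ᴴ = ((N : ℂ) / M) • 1 := by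
    rw [hconj, htight, Matrix.mul_smul, Matrix.mul_one, Matrix.smul_mul,
      ← star_eq_conjTranspose, mem_unitaryGroup_iff.mp hU]
  calc _ = ∑ m, (√(((U * F) * (U * F)ᴴ) m m).re - √(((U * Ft) * (U * Ft)ᴴ) m m).re) ^ 2 := by
        rw [hF, hFt]; simp
    _ ≤ hsq (U * F - U * Ft) := sum_sq_sqrt_sub_le_hsq _ _
    _ = hsq (Ft - F) := by rw [← Matrix.mul_sub, hsq_unitary_mul hU, hsq_sub_comm]

theorem dist_to_tight_frame_eigenvalue_bound
    (M N : ℕ) (hM : 0 < M) (hN : 0 < N)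
    (F Ft : Matrix (Fin M) (Fin N) ℂ)
    (hunit : ∀ n : Fin N, ∑ m : Fin M, ‖F m n‖ ^ 2 = 1)
    (htight : Ft * Ft.conjTranspose = ((N : ℂ) / M) • (1 : Matrix (Fin M) (Fin M) ℂ)) :
    ∑ m : Fin M,
        (Real.sqrt ((Matrix.isHermitian_mul_conjTranspose_self F).eigenvalues m)
          - Real.sqrt ((N : ℝ) / M)) ^ 2
      ≤ hsq (Ft - F) :=
  dist_to_tight_frame_eigenvalue_bound_general M N F Ft htight
end
end

section
/- Let ε ∈ (0, 1/(2M)]. For every ε-orthogonally partitionable unit-norm sequence F in C^M with N vectors, there exists an orthogonally partitionable unit-norm sequence F̃ (same partition sizes) with ‖F̃ − F‖_HS ≤ (2N)^{1/2}(Mε)^{1/3}. -/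
noncomputable section
open scoped InnerProductSpace
open Finset

def col {M N : ℕ} (F : Matrix (Fin M) (Fin N) ℂ) (n : Fin N) : EuclideanSpace ℂ (Fin M) :=
  (WithLp.equiv 2 (Fin M → ℂ)).symm (fun m => F m n)

/-!
Let `T = ∑_{i ∈ I} f_i f_iᴴ` be the frame operator of the first block and `(e_k)` an orthonormal
eigenbasis of `T`, with eigenvalues `μ_k = ∑_{i ∈ I} |⟨e_k, f_i⟩|²`. For `j ∉ I` one has
`μ_k ⟨e_k, f_j⟩ = ∑_{i ∈ I} ⟨e_k, f_i⟩ ⟨f_i, f_j⟩`, and Cauchy–Schwarz gives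
`μ_k |⟨e_k, f_j⟩|² ≤ ε² |I|`: the second block is nearly orthogonal to the eigenvectors with
large eigenvalue. Let `K` consist of the eigenvectors with `μ_k ≥ Nε/2` together with one of
maximal eigenvalue. Replace `f_i` (`i ∈ I`) by its normalised component in `span (e_k)_{k ∈ K}`
and `f_j` (`j ∉ I`) by its normalised component in the orthogonal complement. The squared
distance a vector moves is at most twice the squared norm of the component it loses, and these
losses add up to at most `N M ε (1 + ε)`, which is at most `N (M ε)^{2/3}` since `M ε ≤ 1/2` and
`M ≥ 2`.
-/

section UnitVectors

variable {𝕜 E : Type*} [RCLike 𝕜] [NormedAddCommGroup E] [InnerProductSpace 𝕜 E]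

theorem Submodule.exists_norm_eq_one_norm_sub_eq {U : Submodule 𝕜 E} (hU : U ≠ ⊥) {v : E}
    (hv : v ∈ U) (hv1 : ‖v‖ ≤ 1) : ∃ g ∈ U, ‖g‖ = 1 ∧ ‖g - v‖ = 1 - ‖v‖ := by
  rcases eq_or_ne v 0 with rfl | hv0
  · obtain ⟨u, hu, hu0⟩ := U.ne_bot_iff.mp hU
    exact ⟨(‖u‖⁻¹ : 𝕜) • u, U.smul_mem _ hu, norm_smul_inv_norm hu0,
      by simp [norm_smul_inv_norm hu0]⟩
  refine ⟨(‖v‖⁻¹ : 𝕜) • v, U.smul_mem _ hv, norm_smul_inv_norm hv0, ?_⟩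
  have hv0' : 0 < ‖v‖ := norm_pos_iff.mpr hv0
  have hsub : (‖v‖⁻¹ : 𝕜) • v - v = ((‖v‖⁻¹ - 1 : ℝ) : 𝕜) • v := by simp [sub_smul]
  rw [hsub, norm_smul, RCLike.norm_ofReal,
    abs_of_nonneg (sub_nonneg.mpr ((one_le_inv₀ hv0').mpr hv1)), sub_mul,
    inv_mul_cancel₀ hv0'.ne', one_mul]

theorem Submodule.exists_norm_eq_one_norm_sub_sq_le {U : Submodule 𝕜 E} (hU : U ≠ ⊥) {v w : E}
    (hv : v ∈ U) (hw : w ∈ Uᗮ) (hvw : ‖v + w‖ = 1) :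
    ∃ g ∈ U, ‖g‖ = 1 ∧ ‖g - (v + w)‖ ^ 2 ≤ 2 * ‖w‖ ^ 2 := by
  have pythagoras : ∀ u ∈ U, ∀ u' ∈ Uᗮ, ‖u + u'‖ ^ 2 = ‖u‖ ^ 2 + ‖u'‖ ^ 2 := fun u hu u' hu' => by
    rw [@norm_add_sq 𝕜, Submodule.inner_right_of_mem_orthogonal hu hu', map_zero, mul_zero,
      add_zero]
  have hsum : ‖v‖ ^ 2 + ‖w‖ ^ 2 = 1 := by rw [← pythagoras v hv w hw, hvw, one_pow]
  have hv1 : ‖v‖ ≤ 1 := by nlinarith [norm_nonneg v]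
  obtain ⟨g, hgU, hg1, hgv⟩ := U.exists_norm_eq_one_norm_sub_eq hU hv hv1
  refine ⟨g, hgU, hg1, ?_⟩
  -- `(1 - ‖v‖)² ≤ (1 - ‖v‖)(1 + ‖v‖) = ‖w‖²`
  calc ‖g - (v + w)‖ ^ 2 = (1 - ‖v‖) ^ 2 + ‖w‖ ^ 2 := by
        rw [sub_add_eq_sub_sub, sub_eq_add_neg _ w, pythagoras _ (U.sub_mem hgU hv) _
          (Uᗮ.neg_mem hw), hgv, norm_neg]
    _ ≤ 2 * ‖w‖ ^ 2 := by nlinarith [norm_nonneg v]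

end UnitVectors

namespace OrthonormalBasis

variable {𝕜 E κ : Type*} [RCLike 𝕜] [NormedAddCommGroup E] [InnerProductSpace 𝕜 E]
  [Fintype κ] (b : OrthonormalBasis κ 𝕜 E)

theorem sum_smul_mem_span_image (K : Finset κ) (c : κ → 𝕜) :
    ∑ k ∈ K, c k • b k ∈ Submodule.span 𝕜 (b '' K) :=
  Submodule.sum_mem _ fun k hk => Submodule.smul_mem _ _ (Submodule.subset_span ⟨k, hk, rfl⟩)

theorem norm_sum_smul_sq (K : Finset κ) (c : κ → 𝕜) :
    ‖∑ k ∈ K, c k • b k‖ ^ 2 = ∑ k ∈ K, ‖c k‖ ^ 2 := by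
  rw [@norm_sq_eq_re_inner 𝕜, b.orthonormal.inner_sum, map_sum]
  simp [RCLike.conj_mul]

variable [DecidableEq κ]

theorem isOrtho_span_image_compl (K : Finset κ) :
    Submodule.span 𝕜 (b '' K) ⟂ Submodule.span 𝕜 (b '' ↑Kᶜ) := by
  rw [Submodule.isOrtho_span]
  rintro _ ⟨k, hk, rfl⟩ _ ⟨l, hl, rfl⟩
  exact b.orthonormal.inner_eq_zero fun hkl => (mem_compl.mp hl) (hkl ▸ hk)

theorem exists_norm_eq_one_mem_span_image {K : Finset κ} (hK : K.Nonempty) {x : E}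
    (hx : ‖x‖ = 1) : ∃ g ∈ Submodule.span 𝕜 (b '' K), ‖g‖ = 1 ∧
      ‖g - x‖ ^ 2 ≤ 2 * ∑ k ∈ Kᶜ, ‖⟪b k, x⟫_𝕜‖ ^ 2 := by
  obtain ⟨k, hk⟩ := hK
  have hU : Submodule.span 𝕜 (b '' K) ≠ ⊥ := (Submodule.ne_bot_iff _).mpr
    ⟨b k, Submodule.subset_span ⟨k, hk, rfl⟩, b.orthonormal.ne_zero k⟩
  have hx_split : ∑ k ∈ K, ⟪b k, x⟫_𝕜 • b k + ∑ k ∈ Kᶜ, ⟪b k, x⟫_𝕜 • b k = x := by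
    rw [sum_add_sum_compl, b.sum_repr']
  have hw := (b.isOrtho_span_image_compl K).ge (b.sum_smul_mem_span_image Kᶜ fun k => ⟪b k, x⟫_𝕜)
  obtain ⟨g, hgU, hg1, hgx⟩ := Submodule.exists_norm_eq_one_norm_sub_sq_le hU
    (b.sum_smul_mem_span_image K _) hw (hx_split ▸ hx)
  rw [hx_split, norm_sum_smul_sq] at hgx
  exact ⟨g, hgU, hg1, hgx⟩

theorem exists_orthogonal_partition_sum_norm_sub_sq_le {K : Finset κ} (hK : K.Nonempty) (hKc : Kᶜ.Nonempty)
    {ι : Type*} [Fintype ι] [DecidableEq ι] {f : ι → E} (hf : ∀ n, ‖f n‖ = 1) (s : Finset ι) :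
    ∃ g : ι → E, (∀ n, ‖g n‖ = 1) ∧ (∀ i ∈ s, ∀ j ∉ s, ⟪g i, g j⟫_𝕜 = 0) ∧
      ∑ n, ‖g n - f n‖ ^ 2 ≤ 2 * (∑ i ∈ s, ∑ k ∈ Kᶜ, ‖⟪b k, f i⟫_𝕜‖ ^ 2 +
        ∑ j ∈ sᶜ, ∑ k ∈ K, ‖⟪b k, f j⟫_𝕜‖ ^ 2) := by
  have near : ∀ n, ∃ g, (n ∈ s → g ∈ Submodule.span 𝕜 (b '' K)) ∧
      (n ∉ s → g ∈ Submodule.span 𝕜 (b '' ↑Kᶜ)) ∧ ‖g‖ = 1 ∧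
      ‖g - f n‖ ^ 2 ≤ 2 * if n ∈ s then ∑ k ∈ Kᶜ, ‖⟪b k, f n⟫_𝕜‖ ^ 2
        else ∑ k ∈ K, ‖⟪b k, f n⟫_𝕜‖ ^ 2 := by
    intro n
    by_cases hn : n ∈ s
    · obtain ⟨g, hgU, hg1, hgf⟩ := b.exists_norm_eq_one_mem_span_image hK (hf n)
      exact ⟨g, fun _ => hgU, absurd hn, hg1, by rwa [if_pos hn]⟩
    · obtain ⟨g, hgU, hg1, hgf⟩ := b.exists_norm_eq_one_mem_span_image hKc (hf n)
      exact ⟨g, fun h => absurd h hn, fun _ => hgU, hg1, by rwa [if_neg hn, ← compl_compl K]⟩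
  choose g hgK hgKc hg1 hgf using near
  refine ⟨g, hg1, fun i hi j hj =>
    (b.isOrtho_span_image_compl K).inner_eq (hgK i hi) (hgKc j hj), ?_⟩
  calc ∑ n, ‖g n - f n‖ ^ 2 ≤ ∑ n, 2 * if n ∈ s then ∑ k ∈ Kᶜ, ‖⟪b k, f n⟫_𝕜‖ ^ 2
        else ∑ k ∈ K, ‖⟪b k, f n⟫_𝕜‖ ^ 2 := sum_le_sum fun n _ => hgf n
    _ = _ := by
      rw [← mul_sum, ← sum_add_sum_compl s]
      congr 2 <;> refine sum_congr rfl fun n hn => ?_ <;> simp_all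

end OrthonormalBasis

section FrameOperator

variable (𝕜 : Type*) {E ι : Type*} [RCLike 𝕜] [NormedAddCommGroup E] [InnerProductSpace 𝕜 E]

def frameOperator (f : ι → E) (s : Finset ι) : E →L[𝕜] E :=
  ∑ i ∈ s, InnerProductSpace.rankOne 𝕜 (f i) (f i)

variable {𝕜}

theorem frameOperator_apply (f : ι → E) (s : Finset ι) (x : E) :
    frameOperator 𝕜 f s x = ∑ i ∈ s, ⟪f i, x⟫_𝕜 • f i := by
  simp [frameOperator]

theorem isSymmetric_frameOperator (f : ι → E) (s : Finset ι) :
    (frameOperator 𝕜 f s : E →ₗ[𝕜] E).IsSymmetric := fun x y => by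
  simp [frameOperator_apply, sum_inner, inner_sum, inner_smul_left, inner_smul_right, mul_comm]

theorem inner_frameOperator_left (f : ι → E) (s : Finset ι) (e x : E) :
    ⟪frameOperator 𝕜 f s e, x⟫_𝕜 = ∑ i ∈ s, ⟪e, f i⟫_𝕜 * ⟪f i, x⟫_𝕜 := by
  simp [frameOperator_apply, sum_inner, inner_smul_left]

variable {f : ι → E} {s : Finset ι} {e : E} {μ : ℝ}

theorem eigenvalue_frameOperator_eq (he : ‖e‖ = 1)
    (hμ : frameOperator 𝕜 f s e = (μ : 𝕜) • e) : μ = ∑ i ∈ s, ‖⟪e, f i⟫_𝕜‖ ^ 2 := by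
  have h := inner_frameOperator_left (𝕜 := 𝕜) f s e e
  rw [hμ, inner_smul_left, inner_self_eq_norm_sq_to_K, he] at h
  simp_rw [← inner_conj_symm _ e, RCLike.mul_conj] at h
  rw [RCLike.conj_ofReal, RCLike.ofReal_one, one_pow, mul_one] at h
  exact_mod_cast h

theorem eigenvalue_mul_norm_inner_sq_le (he : ‖e‖ = 1)
    (hμ : frameOperator 𝕜 f s e = (μ : 𝕜) • e) {x : E} {ε : ℝ}
    (hx : ∀ i ∈ s, ‖⟪f i, x⟫_𝕜‖ ≤ ε) : μ * ‖⟪e, x⟫_𝕜‖ ^ 2 ≤ ε ^ 2 * #s := by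
  have hμ_eq := eigenvalue_frameOperator_eq he hμ
  have hμ0 : 0 ≤ μ := hμ_eq ▸ sum_nonneg fun i _ => sq_nonneg _
  have hlin : μ * ‖⟪e, x⟫_𝕜‖ ≤ ε * ∑ i ∈ s, ‖⟪e, f i⟫_𝕜‖ := by
    have h := inner_frameOperator_left (𝕜 := 𝕜) f s e x
    rw [hμ, inner_smul_left, RCLike.conj_ofReal] at h
    calc μ * ‖⟪e, x⟫_𝕜‖ = ‖∑ i ∈ s, ⟪e, f i⟫_𝕜 * ⟪f i, x⟫_𝕜‖ := by
          rw [← h, norm_mul, RCLike.norm_ofReal, abs_of_nonneg hμ0]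
      _ ≤ ∑ i ∈ s, ‖⟪e, f i⟫_𝕜‖ * ε := (norm_sum_le _ _).trans <| sum_le_sum fun i hi => by
          rw [norm_mul]; exact mul_le_mul_of_nonneg_left (hx i hi) (norm_nonneg _)
      _ = ε * ∑ i ∈ s, ‖⟪e, f i⟫_𝕜‖ := by rw [← sum_mul, mul_comm]
  have hcs : (∑ i ∈ s, ‖⟪e, f i⟫_𝕜‖) ^ 2 ≤ #s * μ := hμ_eq ▸ sq_sum_le_card_mul_sum_sq
  rcases hμ0.eq_or_lt with rfl | hμ_pos
  · rw [zero_mul]; positivity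
  refine le_of_mul_le_mul_right ?_ hμ_pos
  calc μ * ‖⟪e, x⟫_𝕜‖ ^ 2 * μ = (μ * ‖⟪e, x⟫_𝕜‖) ^ 2 := by ring
    _ ≤ (ε * ∑ i ∈ s, ‖⟪e, f i⟫_𝕜‖) ^ 2 := pow_le_pow_left₀ (by positivity) hlin 2
    _ ≤ ε ^ 2 * (#s * μ) := by rw [mul_pow]; exact mul_le_mul_of_nonneg_left hcs (sq_nonneg ε)
    _ = ε ^ 2 * #s * μ := by ring

end FrameOperator

section CoordinateSplit

variable {κ ι : Type*} [Fintype κ]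

theorem exists_sum_le_card_mul [Nonempty κ] (a : κ → ℝ) :
    ∃ k, ∑ l, a l ≤ Fintype.card κ * a k := by
  obtain ⟨k, -, hk⟩ := exists_max_image univ a univ_nonempty
  exact ⟨k, by simpa using sum_le_card_nsmul univ a (a k) fun l _ => hk l (mem_univ l)⟩

theorem sum_insert_filter_le [DecidableEq κ] {a μ : κ → ℝ} {δ t : ℝ} (ha : ∀ k, 0 ≤ a k)
    (hμa : ∀ k, μ k * a k ≤ δ) {k₀ : κ} (hk₀ : 0 < μ k₀) (ht : 0 < t) :
    ∑ k ∈ insert k₀ (univ.filter fun k => t ≤ μ k), a k ≤ Fintype.card κ * (δ / t) + δ / μ k₀ := by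
  set A := univ.filter fun k => t ≤ μ k
  have hδ : 0 ≤ δ := (mul_nonneg hk₀.le (ha k₀)).trans (hμa k₀)
  have hA : ∀ k ∈ A, a k ≤ δ / t := fun k hk => by
    rw [le_div_iff₀ ht, mul_comm]
    exact (mul_le_mul_of_nonneg_right (mem_filter.1 hk).2 (ha k)).trans (hμa k)
  calc ∑ k ∈ insert k₀ A, a k ≤ ∑ k ∈ A, a k + a k₀ := by
        by_cases h : k₀ ∈ A
        · rw [insert_eq_of_mem h]; linarith [ha k₀]
        · rw [sum_insert h, add_comm]
    _ ≤ #A * (δ / t) + δ / μ k₀ := by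
        refine add_le_add (by simpa using sum_le_card_nsmul A _ _ hA) ?_
        rw [le_div_iff₀ hk₀, mul_comm]
        exact hμa k₀
    _ ≤ Fintype.card κ * (δ / t) + δ / μ k₀ := by
        gcongr
        exact card_le_univ A

theorem exists_heavy_ne_light [Fintype ι] [DecidableEq ι] {c : κ → ι → ℝ} {μ : κ → ℝ}
    {s : Finset ι} {ε : ℝ} (hε : 0 < ε) (hMε : Fintype.card κ * ε ≤ 1 / 2)
    (hc0 : ∀ k n, 0 ≤ c k n) (hc1 : ∀ n, ∑ k, c k n = 1) (hμ : ∀ k, μ k = ∑ i ∈ s, c k i)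
    (hμc : ∀ k, ∀ j ∉ s, μ k * c k j ≤ ε ^ 2 * #s) {i₀ j₀ : ι} (hi₀ : i₀ ∈ s) (hj₀ : j₀ ∉ s) :
    ∃ k₀ k₁, k₀ ≠ k₁ ∧ #s ≤ Fintype.card κ * μ k₀ ∧ μ k₁ < Fintype.card ι * ε / 2 := by
  set M := (Fintype.card κ : ℝ)
  -- `k₀` has at least the average weight `#s / M`; `k₁` carries at least `1 / M` of column `j₀`,
  -- so `hμc` forces `μ k₁` to be small.
  have : Nonempty κ := by
    by_contra! h
    simpa using hc1 j₀
  have hM : 0 < M := by simpa [M] using Fintype.card_pos (α := κ)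
  have hs : (1 : ℝ) ≤ #s := by exact_mod_cast card_pos.2 ⟨i₀, hi₀⟩
  have hsN : (#s : ℝ) < Fintype.card ι := by exact_mod_cast card_lt_univ_of_notMem hj₀
  obtain ⟨k₀, hk₀⟩ : ∃ k, #s ≤ M * μ k := by
    have htrace : ∑ k, μ k = #s := by simp_rw [hμ]; rw [sum_comm]; simp [hc1]
    exact htrace ▸ exists_sum_le_card_mul μ
  obtain ⟨k₁, hk₁⟩ : ∃ k, 1 ≤ M * c k j₀ := hc1 j₀ ▸ exists_sum_le_card_mul (c · j₀)
  have hμk₁ : μ k₁ ≤ M * ε * (ε * #s) := by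
    have : 0 ≤ μ k₁ := hμ k₁ ▸ sum_nonneg fun i _ => hc0 k₁ i
    nlinarith [hμc k₁ j₀ hj₀]
  have hMεs := mul_le_mul_of_nonneg_right hMε (by positivity : (0 : ℝ) ≤ ε * #s)
  refine ⟨k₀, k₁, fun h => ?_, hk₀, by nlinarith⟩
  subst h
  have : (#s : ℝ) ≤ M * (M * ε * (ε * #s)) := hk₀.trans (by gcongr)
  nlinarith

theorem exists_coordinate_split_sum_le [DecidableEq κ] [Fintype ι] [DecidableEq ι]
    {c : κ → ι → ℝ} {μ : κ → ℝ} {s : Finset ι} {ε : ℝ} (hε : 0 < ε)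
    (hMε : Fintype.card κ * ε ≤ 1 / 2) (hc0 : ∀ k n, 0 ≤ c k n) (hc1 : ∀ n, ∑ k, c k n = 1)
    (hμ : ∀ k, μ k = ∑ i ∈ s, c k i) (hμc : ∀ k, ∀ j ∉ s, μ k * c k j ≤ ε ^ 2 * #s)
    {i₀ j₀ : ι} (hi₀ : i₀ ∈ s) (hj₀ : j₀ ∉ s) :
    ∃ K : Finset κ, K.Nonempty ∧ Kᶜ.Nonempty ∧
      ∑ i ∈ s, ∑ k ∈ Kᶜ, c k i + ∑ j ∈ sᶜ, ∑ k ∈ K, c k j ≤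
        Fintype.card ι * (Fintype.card κ * ε * (1 + ε)) := by
  obtain ⟨k₀, k₁, hk₀₁, hk₀, hk₁⟩ := exists_heavy_ne_light hε hMε hc0 hc1 hμ hμc hi₀ hj₀
  set M := (Fintype.card κ : ℝ)
  set N := (Fintype.card ι : ℝ) with hN
  have hM : 0 < M := by simpa [M] using Fintype.card_pos_iff.2 ⟨k₀⟩
  have hs : (1 : ℝ) ≤ #s := by exact_mod_cast card_pos.2 ⟨i₀, hi₀⟩
  have hsN : (#s : ℝ) + #sᶜ = N := by rw [hN]; exact_mod_cast card_add_card_compl s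
  have hμk₀ : 0 < μ k₀ := pos_of_mul_pos_right (by linarith) hM.le
  set t := N * ε / 2 with ht
  have htpos : 0 < t := by rw [ht]; nlinarith [hsN]
  set K := insert k₀ (univ.filter fun k => t ≤ μ k)
  have hk₁K : k₁ ∉ K := by
    simp only [K, mem_insert, mem_filter, mem_univ, true_and, not_or, not_le]
    exact ⟨hk₀₁.symm, hk₁⟩
  refine ⟨K, ⟨k₀, mem_insert_self _ _⟩, ⟨k₁, mem_compl.2 hk₁K⟩, ?_⟩
  have hI : ∑ i ∈ s, ∑ k ∈ Kᶜ, c k i ≤ M * t := by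
    rw [sum_comm]
    simp_rw [← hμ]
    calc ∑ k ∈ Kᶜ, μ k ≤ ∑ k ∈ Kᶜ, t := sum_le_sum fun k hk => by
          simp only [K, mem_compl, mem_insert, mem_filter, mem_univ, true_and, not_or,
            not_le] at hk
          exact hk.2.le
      _ ≤ M * t := by
          rw [sum_const, nsmul_eq_mul]
          exact mul_le_mul_of_nonneg_right (Nat.cast_le.mpr (card_le_univ _)) htpos.le
  have hJ : ∀ j ∉ s, ∑ k ∈ K, c k j ≤ M * (2 * ε * #s / N) + M * ε ^ 2 := fun j hj => by
    refine (sum_insert_filter_le (hc0 · j) (hμc · j hj) hμk₀ htpos).trans ?_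
    gcongr ?_ + ?_
    · rw [ht]; field_simp; rfl
    · rw [div_le_iff₀ hμk₀]; nlinarith
  -- `4 #s #sᶜ ≤ (#s + #sᶜ)²`
  have hsc_s : #sᶜ * (2 * ε * #s / N) ≤ ε * N / 2 := by
    rw [mul_div_assoc', div_le_iff₀ (by linarith), ← hsN]
    nlinarith [mul_nonneg hε.le (sq_nonneg ((#s : ℝ) - #sᶜ))]
  calc ∑ i ∈ s, ∑ k ∈ Kᶜ, c k i + ∑ j ∈ sᶜ, ∑ k ∈ K, c k j
      ≤ M * t + ∑ j ∈ sᶜ, (M * (2 * ε * #s / N) + M * ε ^ 2) :=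
        add_le_add hI (sum_le_sum fun j hj => hJ j (mem_compl.1 hj))
    _ = M * t + M * (#sᶜ * (2 * ε * #s / N)) + #sᶜ * (M * ε ^ 2) := by
        rw [sum_const, nsmul_eq_mul]; ring
    _ ≤ N * (M * ε * (1 + ε)) := by
        nlinarith [mul_le_mul_of_nonneg_left hsc_s hM.le,
          mul_le_mul_of_nonneg_right (by linarith : (#sᶜ : ℝ) ≤ N) (by positivity : 0 ≤ M * ε ^ 2)]

end CoordinateSplit

section Perturbation

variable {𝕜 E ι : Type*} [RCLike 𝕜] [NormedAddCommGroup E] [InnerProductSpace 𝕜 E]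

theorem two_le_finrank_of_norm_inner_lt_one [FiniteDimensional 𝕜 E] {u v : E} (hu : ‖u‖ = 1)
    (hv : ‖v‖ = 1) (huv : ‖⟪u, v⟫_𝕜‖ < 1) : 2 ≤ Module.finrank 𝕜 E := by
  by_contra! h
  obtain ⟨e, he⟩ := finrank_le_one_iff.mp (Nat.le_of_lt_succ h)
  obtain ⟨a, rfl⟩ := he u
  obtain ⟨b, rfl⟩ := he v
  rw [inner_smul_left, inner_smul_right, inner_self_eq_norm_sq_to_K] at huv
  rw [norm_smul] at hu hv
  simp only [norm_mul, RCLike.norm_conj, norm_pow, RCLike.norm_ofReal, abs_norm] at huv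
  nlinarith

theorem exists_orthogonal_partition_near [FiniteDimensional 𝕜 E] [Fintype ι] [DecidableEq ι]
    {f : ι → E} (hf : ∀ n, ‖f n‖ = 1) {s : Finset ι} {i₀ j₀ : ι} (hi₀ : i₀ ∈ s) (hj₀ : j₀ ∉ s)
    {ε : ℝ} (hε : 0 < ε) (hMε : Module.finrank 𝕜 E * ε ≤ 1 / 2)
    (hf_orth : ∀ i ∈ s, ∀ j ∉ s, ‖⟪f i, f j⟫_𝕜‖ ≤ ε) :
    ∃ g : ι → E, (∀ n, ‖g n‖ = 1) ∧ (∀ i ∈ s, ∀ j ∉ s, ⟪g i, g j⟫_𝕜 = 0) ∧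
      ∑ n, ‖g n - f n‖ ^ 2 ≤ 2 * (Fintype.card ι * (Module.finrank 𝕜 E * ε * (1 + ε))) := by
  have hT := isSymmetric_frameOperator (𝕜 := 𝕜) f s
  set b := hT.eigenvectorBasis rfl
  have heig (k) := hT.apply_eigenvectorBasis rfl k
  obtain ⟨K, hK, hKc, hsum⟩ := exists_coordinate_split_sum_le (c := fun k n => ‖⟪b k, f n⟫_𝕜‖ ^ 2)
    hε (by simpa using hMε) (fun _ _ => by positivity)
    (fun n => by rw [b.sum_sq_norm_inner_right, hf n, one_pow])
    (fun k => eigenvalue_frameOperator_eq (b.orthonormal.norm_eq_one k) (heig k))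
    (fun k j hj => eigenvalue_mul_norm_inner_sq_le (b.orthonormal.norm_eq_one k) (heig k)
      fun i hi => hf_orth i hi j hj)
    hi₀ hj₀
  rw [Fintype.card_fin] at hsum
  obtain ⟨g, hg1, hg_orth, hgf⟩ := b.exists_orthogonal_partition_sum_norm_sub_sq_le hK hKc hf s
  exact ⟨g, hg1, hg_orth, hgf.trans (by gcongr)⟩

end Perturbation

theorem mul_one_add_le_rpow_sq {x ε : ℝ} (hx0 : 0 ≤ x) (hx : x ≤ 1 / 2) (hε0 : 0 ≤ ε)
    (hε : ε ≤ 1 / 4) : x * (1 + ε) ≤ (x ^ (1 / 3 : ℝ)) ^ 2 := by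
  set a := x ^ (1 / 3 : ℝ)
  have ha3 : a ^ 3 = x := by
    rw [← Real.rpow_natCast, ← Real.rpow_mul hx0]
    norm_num
  have ha : a * (1 + ε) ≤ 1 := by
    have hcube : (a * (1 + ε)) ^ 3 ≤ 1 := by
      rw [mul_pow, ha3]
      nlinarith [pow_le_pow_left₀ (by linarith) (by linarith : 1 + ε ≤ 5 / 4) 3]
    exact (pow_le_one_iff_of_nonneg (by positivity) (by norm_num)).1 hcube
  calc x * (1 + ε) = a ^ 2 * (a * (1 + ε)) := by rw [← ha3]; ring
    _ ≤ a ^ 2 := mul_le_of_le_one_right (by positivity) ha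

theorem hsq_eq_sum_norm_col_sq {M N : ℕ} (A : Matrix (Fin M) (Fin N) ℂ) :
    hsq A = ∑ n, ‖col A n‖ ^ 2 := by
  simp_rw [EuclideanSpace.norm_sq_eq]
  exact sum_comm

theorem jump_to_orthogonally_partitionable
    (M N : ℕ) (hM : 0 < M) (ε : ℝ) (hε0 : 0 < ε) (hε1 : ε ≤ 1 / (2 * M))
    (F : Matrix (Fin M) (Fin N) ℂ)
    (hunit : ∀ n : Fin N, ‖col F n‖ = 1)
    (I : Finset (Fin N)) (hIne : I ≠ ∅) (hInu : I ≠ univ)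
    (hop : ∀ i ∈ I, ∀ j ∉ I, ‖⟪col F i, col F j⟫_ℂ‖ < ε) :
    ∃ Ft : Matrix (Fin M) (Fin N) ℂ,
      (∀ n : Fin N, ‖col Ft n‖ = 1) ∧
      (∀ i ∈ I, ∀ j ∉ I, ⟪col Ft i, col Ft j⟫_ℂ = 0) ∧
      Real.sqrt (hsq (Ft - F)) ≤ Real.sqrt (2 * N) * ((M : ℝ) * ε) ^ ((1 : ℝ) / 3) := by
  obtain ⟨i₀, hi₀⟩ := nonempty_iff_ne_empty.2 hIne
  obtain ⟨j₀, hj₀⟩ : ∃ j, j ∉ I := by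
    by_contra! h
    exact hInu (eq_univ_of_forall h)
  have hdim : Module.finrank ℂ (EuclideanSpace ℂ (Fin M)) = M := finrank_euclideanSpace_fin
  have hMε : M * ε ≤ 1 / 2 := by
    rw [le_div_iff₀ (by positivity)] at hε1
    linarith
  have hM2 : (2 : ℝ) ≤ M := by
    have hε1' : ε < 1 := by nlinarith [(Nat.one_le_cast (α := ℝ)).2 hM]
    exact_mod_cast hdim ▸ two_le_finrank_of_norm_inner_lt_one (hunit i₀) (hunit j₀)
      ((hop i₀ hi₀ j₀ hj₀).trans hε1')
  obtain ⟨g, hg1, hg_orth, hgf⟩ := exists_orthogonal_partition_near hunit hi₀ hj₀ hε0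
    (hdim.symm ▸ hMε) fun i hi j hj => (hop i hi j hj).le
  rw [hdim, Fintype.card_fin] at hgf
  refine ⟨Matrix.of fun m n => g n m, hg1, hg_orth, ?_⟩
  rw [Real.sqrt_le_left (by positivity), hsq_eq_sum_norm_col_sq, mul_pow,
    Real.sq_sqrt (by positivity)]
  calc ∑ n, ‖g n - col F n‖ ^ 2 ≤ 2 * (N * (M * ε * (1 + ε))) := hgf
    _ ≤ 2 * N * ((M * ε) ^ (1 / 3 : ℝ)) ^ 2 := by
      rw [← mul_assoc]
      gcongr
      exact mul_one_add_le_rpow_sq (by positivity) hMε hε0.le (by nlinarith)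
end
end
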